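/- In a free group, any two commuting elements lie in a common cyclic subgroup; consequently every abelian subgroup of a free group is cyclic. -/
import Mathlib

open Subgroup

private lemma freegroup_comm_cyclic (S : Type*)
    (hc : ∀ a b : FreeGroup S, a * b = b * a) : IsCyclic (FreeGroup S) := by
  classical
  by_cases hs : ∀ a b : S, a = b
  · rcases isEmpty_or_nonempty S with hS | ⟨⟨a⟩⟩
    · refine ⟨1, fun x => ?_⟩
      have h1 : (⊤ : Subgroup (FreeGroup S)) = ⊥ := by
        rw [← FreeGroup.closure_range_of S]
        have : Set.range (FreeGroup.of : S → FreeGroup S) = ∅ := by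
          simp [Set.range_eq_empty]
        rw [this, Subgroup.closure_empty]
      have hx : x ∈ (⊥ : Subgroup (FreeGroup S)) := h1 ▸ Subgroup.mem_top x
      rw [Subgroup.mem_bot] at hx
      simp [hx]
    · refine ⟨FreeGroup.of a, fun x => ?_⟩
      have hr : Set.range (FreeGroup.of : S → FreeGroup S) = {FreeGroup.of a} := by
        ext g; constructor
        · rintro ⟨b, rfl⟩; simp [hs b a]
        · rintro rfl; exact ⟨a, rfl⟩
      have h1 : Subgroup.closure {FreeGroup.of a} = ⊤ := by
        rw [← hr, FreeGroup.closure_range_of]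
      rw [← Subgroup.zpowers_eq_closure] at h1
      have hx : x ∈ Subgroup.zpowers (FreeGroup.of a) := h1 ▸ Subgroup.mem_top x
      exact hx
  · exfalso
    push_neg at hs
    obtain ⟨a, b, hab⟩ := hs
    let f : S → Equiv.Perm (Fin 3) := fun s =>
      if s = a then Equiv.swap 0 1 else if s = b then Equiv.swap 1 2 else 1
    let F : FreeGroup S →* Equiv.Perm (Fin 3) := FreeGroup.lift f
    have ha : F (FreeGroup.of a) = Equiv.swap 0 1 := by
      simp [F, FreeGroup.lift_apply_of, f]
    have hb : F (FreeGroup.of b) = Equiv.swap 1 2 := by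
      simp [F, FreeGroup.lift_apply_of, f, Ne.symm hab]
    have hcab := hc (FreeGroup.of a) (FreeGroup.of b)
    have h2 : Equiv.swap (0 : Fin 3) 1 * Equiv.swap 1 2
        = Equiv.swap 1 2 * Equiv.swap 0 1 := by
      rw [← ha, ← hb, ← map_mul, ← map_mul, hcab]
    have h3 := congrArg (fun σ : Equiv.Perm (Fin 3) => σ 1) h2
    simp [Equiv.swap_apply_of_ne_of_ne, Equiv.Perm.mul_apply] at h3

private lemma free_comm_cyclic (G : Type*) [Group G] [IsFreeGroup G]
    (hc : ∀ a b : G, a * b = b * a) : IsCyclic G := by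
  let e := IsFreeGroup.toFreeGroup G
  have hc' : ∀ a b : FreeGroup (IsFreeGroup.Generators G), a * b = b * a := by
    intro a b
    have h := congrArg e (hc (e.symm a) (e.symm b))
    simpa [map_mul] using h
  have := freegroup_comm_cyclic _ hc'
  exact isCyclic_of_surjective e.symm e.symm.surjective

theorem stmt_10 (X : Type*) :
    (∀ x y : FreeGroup X, x * y = y * x →
      ∃ z : FreeGroup X, x ∈ Subgroup.zpowers z ∧ y ∈ Subgroup.zpowers z) ∧
    (∀ H : Subgroup (FreeGroup X),
      (∀ a b : FreeGroup X, a ∈ H → b ∈ H → a * b = b * a) → IsCyclic H) := by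
  have key : ∀ H : Subgroup (FreeGroup X),
      (∀ a b : FreeGroup X, a ∈ H → b ∈ H → a * b = b * a) → IsCyclic H := by
    intro H hH
    have : ∀ a b : H, a * b = b * a := fun a b =>
      Subtype.ext (hH a b a.2 b.2)
    exact free_comm_cyclic H this
  refine ⟨?_, key⟩
  intro x y hxy
  set H := Subgroup.closure ({x, y} : Set (FreeGroup X)) with hHdef
  have hcomm : ∀ a b : FreeGroup X, a ∈ H → b ∈ H → a * b = b * a := by
    intro a b ha hb
    refine Subgroup.closure_induction₂
      (p := fun u v _ _ => Commute u v)
      (fun p q hp hq => ?_)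
      (fun u _ => Commute.one_left u) (fun u _ => Commute.one_right u)
      (fun u v w _ _ _ h1 h2 => h1.mul_left h2)
      (fun u v w _ _ _ h1 h2 => h1.mul_right h2)
      (fun u v _ _ h => h.inv_left)
      (fun u v _ _ h => h.inv_right)
      ha hb
    rw [Set.mem_insert_iff, Set.mem_singleton_iff] at hp hq
    rcases hp with rfl | rfl <;> rcases hq with rfl | rfl
    · exact Commute.refl _
    · exact hxy
    · exact hxy.symm
    · exact Commute.refl _
  have hcyc := key H hcomm
  obtain ⟨⟨z, hz⟩, hgen⟩ := hcyc
  refine ⟨z, ?_, ?_⟩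
  · have hx : x ∈ H := Subgroup.subset_closure (by simp)
    obtain ⟨n, hn⟩ := hgen ⟨x, hx⟩
    exact ⟨n, congrArg Subtype.val hn⟩
  · have hy : y ∈ H := Subgroup.subset_closure (by simp)
    obtain ⟨n, hn⟩ := hgen ⟨y, hy⟩
    exact ⟨n, congrArg Subtype.val hn⟩
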